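/- On ℝ^{2n} with Euclidean metric, standard symplectic form, and f = (T/2)Σᵢ λᵢxᵢ² (λᵢ = ±1), the anticommutators of the deformed differentials satisfy d_f d_f^{Λ*} + d_f^{Λ*} d_f = −2T Σ_{i=1}^n (λ_{2i−1}+λ_{2i}) e_{2i−1} e_{2i} and d_f* d_f^Λ + d_f^Λ d_f* = 2T Σ_{i=1}^n (λ_{2i−1}+λ_{2i}) e_{2i−1}† e_{2i}†. -/

import Mathlib

/-!
Concrete model of differential forms on `ℝ^{2n}`: a form is a family of
coefficient functions indexed by finite subsets `S ⊆ {0, …, 2n−1}` of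
coordinate indices, representing `∑_S α_S dx_S`.  The metric is Euclidean and
the symplectic form is the standard `ω = ∑_{i<n} dx_{2i} ∧ dx_{2i+1}`
(0-indexed version of `∑ dx_{2i−1} ∧ dx_{2i}`); likewise all index pairs
`(2i−1, 2i)` of the paper appear here 0-indexed as `(2i, 2i+1)`.
-/

noncomputable section

/-- Points of `ℝ^{2n}`. -/
abbrev Pt (n : ℕ) := Fin (2 * n) → ℝ

/-- Differential forms on `ℝ^{2n}` in coordinate components. -/
abbrev FForm (n : ℕ) := Finset ℕ → Pt n → ℝ

/-- The sign `(-1)^{#{j ∈ S : j < i}}`. -/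
def sgn (i : ℕ) (S : Finset ℕ) : ℝ := (-1 : ℝ) ^ (S.filter (· < i)).card

/-- The partial derivative `∂ᵢ` of a function on `ℝ^{2n}`. -/
def pd (n i : ℕ) (g : Pt n → ℝ) : Pt n → ℝ :=
  fun x => if h : i < 2 * n then fderiv ℝ g x (Pi.single ⟨i, h⟩ (1 : ℝ)) else 0

/-- The coordinate function `xᵢ`. -/
def Xc (n i : ℕ) (x : Pt n) : ℝ := if h : i < 2 * n then x ⟨i, h⟩ else 0

/-- `eᵢ = dxᵢ ∧ ·`. -/
def wdgF (n : ℕ) (i : ℕ) (α : FForm n) : FForm n :=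
  fun S x => if i ∈ S then sgn i S * α (S.erase i) x else 0

/-- `eᵢ† = ι_{∂ᵢ}`. -/
def ctrF (n : ℕ) (i : ℕ) (α : FForm n) : FForm n :=
  fun S x => if i ∈ S then 0 else sgn i S * α (insert i S) x

/-- The exterior derivative `d = ∑ᵢ eᵢ ∂ᵢ`. -/
def dExt (n : ℕ) (α : FForm n) : FForm n :=
  fun S x => ∑ i ∈ Finset.range (2 * n), wdgF n i (fun S' => pd n i (α S')) S x

/-- The codifferential `d* = −∑ᵢ eᵢ† ∂ᵢ` for the Euclidean metric. -/
def dStar (n : ℕ) (α : FForm n) : FForm n :=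
  fun S x => -∑ i ∈ Finset.range (2 * n), ctrF n i (fun S' => pd n i (α S')) S x

/-- The quadratic Morse function `f = (T/2) ∑ᵢ λᵢ xᵢ²`. -/
def fquad (n : ℕ) (T : ℝ) (lam : ℕ → ℝ) : Pt n → ℝ :=
  fun x => (T / 2) * ∑ i ∈ Finset.range (2 * n), lam i * (Xc n i x) ^ 2

/-- The Witten-deformed differential `d_f = d + df ∧ · = d + ∑ᵢ (∂ᵢf) eᵢ`. -/
def dW (n : ℕ) (T : ℝ) (lam : ℕ → ℝ) (α : FForm n) : FForm n :=
  fun S x => dExt n α S x +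
    ∑ i ∈ Finset.range (2 * n), pd n i (fquad n T lam) x * wdgF n i α S x

/-- The Witten-deformed codifferential `d_f* = d* + ι_{∇f} = d* + ∑ᵢ (∂ᵢf) eᵢ†`. -/
def dWStar (n : ℕ) (T : ℝ) (lam : ℕ → ℝ) (α : FForm n) : FForm n :=
  fun S x => dStar n α S x +
    ∑ i ∈ Finset.range (2 * n), pd n i (fquad n T lam) x * ctrF n i α S x

/-- The Witten-deformed Hodge Laplacian `Δ_{d_f} = d_f* d_f + d_f d_f*`. -/
def LapW (n : ℕ) (T : ℝ) (lam : ℕ → ℝ) (α : FForm n) : FForm n :=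
  fun S x => dWStar n T lam (dW n T lam α) S x + dW n T lam (dWStar n T lam α) S x

/-- The dual Lefschetz operator `Λ = ι_π`, `π = ∑_{i<n} ∂_{2i} ∧ ∂_{2i+1}`. -/
def LamF (n : ℕ) (α : FForm n) : FForm n :=
  fun S x => ∑ i ∈ Finset.range n, ctrF n (2 * i + 1) (ctrF n (2 * i) α) S x

/-- The Lefschetz operator `L = ω ∧ ·`, `ω = ∑_{i<n} dx_{2i} ∧ dx_{2i+1}`. -/
def LF (n : ℕ) (α : FForm n) : FForm n :=
  fun S x => ∑ i ∈ Finset.range n, wdgF n (2 * i) (wdgF n (2 * i + 1) α) S x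

/-- The deformed symplectic differential `d_f^Λ = [d_f, Λ]`. -/
def dWL (n : ℕ) (T : ℝ) (lam : ℕ → ℝ) (α : FForm n) : FForm n :=
  fun S x => dW n T lam (LamF n α) S x - LamF n (dW n T lam α) S x

/-- The deformed symplectic codifferential `d_f^{Λ*} = [L, d_f*]`. -/
def dWLStar (n : ℕ) (T : ℝ) (lam : ℕ → ℝ) (α : FForm n) : FForm n :=
  fun S x => LF n (dWStar n T lam α) S x - dWStar n T lam (LF n α) S x

open scoped ContDiff

section Comb
variable {n : ℕ}

lemma sgn_sq (i : ℕ) (S : Finset ℕ) : sgn i S * sgn i S = 1 := by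
  unfold sgn
  rw [← pow_add]
  exact (neg_one_pow_eq_one_iff_even (by norm_num)).2 ⟨_, rfl⟩

lemma sgn_erase (i k : ℕ) (S : Finset ℕ) (hk : k ∈ S) :
    sgn i (S.erase k) = if k < i then -sgn i S else sgn i S := by
  unfold sgn
  rw [Finset.filter_erase]
  by_cases h : k < i
  · rw [if_pos h, Finset.card_erase_of_mem ((Finset.mem_filter.mpr ⟨hk, h⟩ : k ∈ S.filter (· < i)))]
    have hc : 0 < (S.filter (· < i)).card := Finset.card_pos.2 ⟨k, (Finset.mem_filter.mpr ⟨hk, h⟩ : k ∈ S.filter (· < i))⟩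
    obtain ⟨m, hm⟩ := Nat.exists_eq_succ_of_ne_zero hc.ne'
    rw [hm]
    simp [pow_succ]
  · rw [if_neg h, Finset.erase_eq_of_notMem (by simp [h])]

lemma sgn_insert (i k : ℕ) (S : Finset ℕ) (hk : k ∉ S) :
    sgn i (insert k S) = if k < i then -sgn i S else sgn i S := by
  unfold sgn
  rw [Finset.filter_insert]
  by_cases h : k < i
  · rw [if_pos h, if_pos h, Finset.card_insert_of_notMem (fun hc => hk (Finset.mem_filter.1 hc).1)]
    simp [pow_succ]
  · rw [if_neg h, if_neg h]

end Comb

section CAR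
variable {n : ℕ}

/-- eᵢeⱼ + eⱼeᵢ = 0 -/
lemma wdg_wdg_anti (i j : ℕ) (α : FForm n) (S : Finset ℕ) (x : Pt n) :
    wdgF n i (wdgF n j α) S x + wdgF n j (wdgF n i α) S x = 0 := by
  simp only [wdgF]
  rcases eq_or_ne i j with rfl | hij
  · simp
  · by_cases hi : i ∈ S
    · by_cases hj : j ∈ S
      · have hji : j ∈ S.erase i := Finset.mem_erase.2 ⟨hij.symm, hj⟩
        have hij' : i ∈ S.erase j := Finset.mem_erase.2 ⟨hij, hi⟩
        rw [if_pos hi, if_pos hj, if_pos hji, if_pos hij',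
          Finset.erase_right_comm, sgn_erase j i S hi, sgn_erase i j S hj]
        rcases lt_or_gt_of_ne hij with h | h
        · rw [if_pos h, if_neg (by omega)]; ring
        · rw [if_neg (by omega), if_pos h]; ring
      · have : j ∉ S.erase i := fun hc => hj (Finset.mem_of_mem_erase hc)
        rw [if_pos hi, if_neg hj, if_neg this]; ring
    · have : i ∉ S.erase j := fun hc => hi (Finset.mem_of_mem_erase hc)
      rw [if_neg hi]
      by_cases hj : j ∈ S
      · rw [if_pos hj, if_neg this]; ring
      · rw [if_neg hj]; ring

/-- eᵢ†eⱼ† + eⱼ†eᵢ† = 0 -/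
lemma ctr_ctr_anti (i j : ℕ) (α : FForm n) (S : Finset ℕ) (x : Pt n) :
    ctrF n i (ctrF n j α) S x + ctrF n j (ctrF n i α) S x = 0 := by
  simp only [ctrF]
  rcases eq_or_ne i j with rfl | hij
  · simp
  · by_cases hi : i ∈ S
    · have hj' : i ∈ insert j S := Finset.mem_insert_of_mem hi
      rw [if_pos hi]
      by_cases hj : j ∈ S
      · rw [if_pos hj]; ring
      · rw [if_neg hj, if_pos hj']; ring
    · by_cases hj : j ∈ S
      · have : j ∈ insert i S := Finset.mem_insert_of_mem hj
        rw [if_neg hi, if_pos hj, if_pos this]; ring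
      · have h1 : j ∉ insert i S := by simp [hij.symm, hj]
        have h2 : i ∉ insert j S := by simp [hij, hi]
        rw [if_neg hi, if_neg hj, if_neg h1, if_neg h2,
          Finset.insert_comm, sgn_insert j i S hi, sgn_insert i j S hj]
        rcases lt_or_gt_of_ne hij with h | h
        · rw [if_pos h, if_neg (by omega)]; ring
        · rw [if_neg (by omega), if_pos h]; ring

/-- eᵢeⱼ† + eⱼ†eᵢ = δᵢⱼ -/
lemma wdg_ctr_anti (i j : ℕ) (α : FForm n) (S : Finset ℕ) (x : Pt n) :
    wdgF n i (ctrF n j α) S x + ctrF n j (wdgF n i α) S x =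
      if i = j then α S x else 0 := by
  simp only [wdgF, ctrF]
  rcases eq_or_ne i j with rfl | hij
  · rw [if_pos rfl]
    by_cases hi : i ∈ S
    · rw [if_pos hi, if_pos hi, if_neg (Finset.notMem_erase i S),
        sgn_erase i i S hi, if_neg (lt_irrefl i), Finset.insert_erase hi]
      rw [← mul_assoc, sgn_sq]; ring
    · rw [if_neg hi, if_neg hi, if_pos (Finset.mem_insert_self i S),
        sgn_insert i i S hi, if_neg (lt_irrefl i), Finset.erase_insert hi, ← mul_assoc, sgn_sq]
      ring
  · rw [if_neg hij]
    by_cases hi : i ∈ S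
    · rw [if_pos hi]
      by_cases hj : j ∈ S
      · rw [if_pos hj, if_pos (Finset.mem_erase.2 ⟨hij.symm, hj⟩)]; ring
      · have hj' : j ∉ S.erase i := fun hc => hj (Finset.mem_of_mem_erase hc)
        have hi' : i ∈ insert j S := Finset.mem_insert_of_mem hi
        rw [if_neg hj, if_neg hj', if_pos hi', sgn_erase j i S hi, sgn_insert i j S hj,
          Finset.erase_insert_of_ne hij.symm]
        rcases lt_or_gt_of_ne hij with h | h
        · rw [if_pos h, if_neg (by omega)]; ring
        · rw [if_neg (by omega), if_pos h]; ring
    · rw [if_neg hi]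
      by_cases hj : j ∈ S
      · rw [if_pos hj]; ring
      · have : i ∉ insert j S := by simp [hij, hi]
        rw [if_neg hj, if_neg this]; ring

end CAR

section Lin
variable {n : ℕ}

lemma wdgF_ptlin (i : ℕ) (a b : FForm n) (c d : ℝ) (S : Finset ℕ) (x : Pt n) :
    wdgF n i (fun S' y => c * a S' y + d * b S' y) S x
      = c * wdgF n i a S x + d * wdgF n i b S x := by
  simp only [wdgF]; split <;> ring

lemma ctrF_ptlin (i : ℕ) (a b : FForm n) (c d : ℝ) (S : Finset ℕ) (x : Pt n) :
    ctrF n i (fun S' y => c * a S' y + d * b S' y) S x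
      = c * ctrF n i a S x + d * ctrF n i b S x := by
  simp only [ctrF]; split <;> ring

lemma wdgF_sub (i : ℕ) (a b : FForm n) (S : Finset ℕ) (x : Pt n) :
    wdgF n i (fun S' y => a S' y - b S' y) S x = wdgF n i a S x - wdgF n i b S x := by
  simp only [wdgF]; split <;> ring

lemma ctrF_sub (i : ℕ) (a b : FForm n) (S : Finset ℕ) (x : Pt n) :
    ctrF n i (fun S' y => a S' y - b S' y) S x = ctrF n i a S x - ctrF n i b S x := by
  simp only [ctrF]; split <;> ring

lemma wdgF_add (i : ℕ) (a b : FForm n) (S : Finset ℕ) (x : Pt n) :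
    wdgF n i (fun S' y => a S' y + b S' y) S x = wdgF n i a S x + wdgF n i b S x := by
  simp only [wdgF]; split <;> ring

lemma ctrF_add (i : ℕ) (a b : FForm n) (S : Finset ℕ) (x : Pt n) :
    ctrF n i (fun S' y => a S' y + b S' y) S x = ctrF n i a S x + ctrF n i b S x := by
  simp only [ctrF]; split <;> ring

lemma wdgF_neg (i : ℕ) (a : FForm n) (S : Finset ℕ) (x : Pt n) :
    wdgF n i (fun S' y => -a S' y) S x = -wdgF n i a S x := by
  simp only [wdgF]; split <;> ring

lemma ctrF_neg (i : ℕ) (a : FForm n) (S : Finset ℕ) (x : Pt n) :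
    ctrF n i (fun S' y => -a S' y) S x = -ctrF n i a S x := by
  simp only [ctrF]; split <;> ring

lemma wdgF_mulfun (i : ℕ) (g : Pt n → ℝ) (a : FForm n) (S : Finset ℕ) (x : Pt n) :
    wdgF n i (fun S' y => g y * a S' y) S x = g x * wdgF n i a S x := by
  simp only [wdgF]; split <;> ring

lemma ctrF_mulfun (i : ℕ) (g : Pt n → ℝ) (a : FForm n) (S : Finset ℕ) (x : Pt n) :
    ctrF n i (fun S' y => g y * a S' y) S x = g x * ctrF n i a S x := by
  simp only [ctrF]; split <;> ring

lemma wdgF_sum {ι : Type*} (u : Finset ι) (F : ι → FForm n) (i : ℕ) (S : Finset ℕ) (x : Pt n) :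
    wdgF n i (fun S' y => ∑ t ∈ u, F t S' y) S x = ∑ t ∈ u, wdgF n i (F t) S x := by
  simp only [wdgF]; split
  · rw [Finset.mul_sum]
  · simp

lemma ctrF_sum {ι : Type*} (u : Finset ι) (F : ι → FForm n) (i : ℕ) (S : Finset ℕ) (x : Pt n) :
    ctrF n i (fun S' y => ∑ t ∈ u, F t S' y) S x = ∑ t ∈ u, ctrF n i (F t) S x := by
  simp only [ctrF]; split
  · simp
  · rw [Finset.mul_sum]

lemma wdgF_if (i : ℕ) (P : Prop) [Decidable P] (a : FForm n) (S : Finset ℕ) (x : Pt n) :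
    wdgF n i (fun S' y => if P then a S' y else 0) S x = if P then wdgF n i a S x else 0 := by
  by_cases h : P
  · simp only [if_pos h]
  · simp only [if_neg h, wdgF, mul_zero]; split <;> rfl

lemma ctrF_if (i : ℕ) (P : Prop) [Decidable P] (a : FForm n) (S : Finset ℕ) (x : Pt n) :
    ctrF n i (fun S' y => if P then a S' y else 0) S x = if P then ctrF n i a S x else 0 := by
  by_cases h : P
  · simp only [if_pos h]
  · simp only [if_neg h, ctrF, mul_zero]; split <;> rfl

end Lin

section PD
variable {n : ℕ}

lemma inf_add_one_le : (∞ : WithTop ℕ∞) + 1 ≤ ∞ := by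
  exact_mod_cast le_refl _

lemma one_le_inf : (1 : WithTop ℕ∞) ≤ ∞ := by exact_mod_cast le_top

lemma two_le_inf : (2 : WithTop ℕ∞) ≤ ∞ := by
  have h1 : (1 : WithTop ℕ∞) ≤ ∞ := one_le_inf
  calc (2 : WithTop ℕ∞) = 1 + 1 := by norm_num
  _ ≤ ∞ + 1 := by exact add_le_add_right h1 1
  _ ≤ ∞ := inf_add_one_le

lemma pd_const (i : ℕ) (c : ℝ) (x : Pt n) : pd n i (fun _ => c) x = 0 := by
  unfold pd; split
  · rw [fderiv_fun_const]; simp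
  · rfl

lemma pd_add (i : ℕ) {g h : Pt n → ℝ} {x : Pt n}
    (hg : DifferentiableAt ℝ g x) (hh : DifferentiableAt ℝ h x) :
    pd n i (fun y => g y + h y) x = pd n i g x + pd n i h x := by
  unfold pd; split
  · rw [fderiv_fun_add hg hh]; simp
  · simp

lemma pd_sub (i : ℕ) {g h : Pt n → ℝ} {x : Pt n}
    (hg : DifferentiableAt ℝ g x) (hh : DifferentiableAt ℝ h x) :
    pd n i (fun y => g y - h y) x = pd n i g x - pd n i h x := by
  unfold pd; split
  · rw [fderiv_fun_sub hg hh]; simp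
  · simp

lemma pd_const_mul (i : ℕ) (c : ℝ) {g : Pt n → ℝ} {x : Pt n}
    (hg : DifferentiableAt ℝ g x) :
    pd n i (fun y => c * g y) x = c * pd n i g x := by
  unfold pd; split
  · rw [fderiv_const_mul hg]; simp
  · simp

lemma pd_mul (i : ℕ) {g h : Pt n → ℝ} {x : Pt n}
    (hg : DifferentiableAt ℝ g x) (hh : DifferentiableAt ℝ h x) :
    pd n i (fun y => g y * h y) x = pd n i g x * h x + g x * pd n i h x := by
  unfold pd; split
  · rw [fderiv_fun_mul hg hh]; simp; ring
  · simp

lemma pd_sum (i : ℕ) {ι : Type*} (u : Finset ι) (F : ι → Pt n → ℝ) {x : Pt n}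
    (hF : ∀ t ∈ u, DifferentiableAt ℝ (F t) x) :
    pd n i (fun y => ∑ t ∈ u, F t y) x = ∑ t ∈ u, pd n i (F t) x := by
  unfold pd; split
  · rw [fderiv_fun_sum hF]; simp
  · simp

lemma contDiff_Xc (i : ℕ) : ContDiff ℝ ∞ (Xc n i) := by
  by_cases h : i < 2 * n
  · have : Xc n i = fun x : Pt n => x ⟨i, h⟩ := by
      funext x; simp [Xc, h]
    rw [this]
    exact (ContinuousLinearMap.proj (R := ℝ) (φ := fun _ : Fin (2*n) => ℝ) ⟨i, h⟩).contDiff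
  · have : Xc n i = fun _ : Pt n => (0 : ℝ) := by
      funext x; simp [Xc, h]
    rw [this]; exact contDiff_const

lemma contDiff_pd (i : ℕ) {g : Pt n → ℝ} (hg : ContDiff ℝ ∞ g) :
    ContDiff ℝ ∞ (pd n i g) := by
  by_cases h : i < 2 * n
  · unfold pd
    simp only [dif_pos h]
    exact (hg.fderiv_right inf_add_one_le).clm_apply contDiff_const
  · unfold pd
    simp only [dif_neg h]
    exact contDiff_const

lemma contDiff_fquad (T : ℝ) (lam : ℕ → ℝ) : ContDiff ℝ ∞ (fquad n T lam) := by
  unfold fquad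
  exact contDiff_const.mul (ContDiff.sum fun i _ => contDiff_const.mul ((contDiff_Xc i).pow 2))

lemma pd_Xc (j i : ℕ) (x : Pt n) :
    pd n j (Xc n i) x = if i = j ∧ i < 2 * n then 1 else 0 := by
  by_cases hj : j < 2 * n
  · simp only [pd, dif_pos hj]
    by_cases hi : i < 2 * n
    · have hx : Xc n i = ⇑(ContinuousLinearMap.proj (R := ℝ) (φ := fun _ : Fin (2*n) => ℝ) ⟨i, hi⟩) := by
        funext y; simp [Xc, hi]
      rw [hx, ContinuousLinearMap.fderiv, ContinuousLinearMap.proj_apply]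
      rcases eq_or_ne i j with rfl | hij
      · simp [Pi.single_apply, hi]
      · have : (⟨j, hj⟩ : Fin (2*n)) ≠ ⟨i, hi⟩ := by simp [Fin.ext_iff]; omega
        simp [Pi.single_apply, this, hij.symm, hij]
    · have hx : Xc n i = fun _ : Pt n => (0 : ℝ) := by funext y; simp [Xc, hi]
      rw [hx, fderiv_fun_const]
      simp [hi]
  · simp only [pd, dif_neg hj]
    have : ¬(i = j ∧ i < 2 * n) := by rintro ⟨rfl, h⟩; exact hj h
    rw [if_neg this]

lemma pd_fquad (T : ℝ) (lam : ℕ → ℝ) (j : ℕ) (x : Pt n) :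
    pd n j (fquad n T lam) x = T * lam j * Xc n j x := by
  have dXc : ∀ i, DifferentiableAt ℝ (Xc n i) x := fun i =>
    ((contDiff_Xc i).differentiable (by simp)).differentiableAt
  have hterm : ∀ i : ℕ, (fun y : Pt n => lam i * (Xc n i y) ^ 2)
      = fun y => lam i * (Xc n i y * Xc n i y) := by
    intro i; funext y; ring
  have hdterm : ∀ i : ℕ, DifferentiableAt ℝ (fun y : Pt n => lam i * (Xc n i y) ^ 2) x := by
    intro i; rw [hterm i]
    exact (differentiableAt_const _).mul ((dXc i).mul (dXc i))
  unfold fquad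
  rw [pd_const_mul _ _ (DifferentiableAt.fun_sum fun i _ => hdterm i),
    pd_sum _ _ _ (fun i _ => hdterm i)]
  have key : ∀ i ∈ Finset.range (2 * n),
      pd n j (fun y => lam i * (Xc n i y) ^ 2) x
        = if i = j then 2 * (lam j * Xc n j x) else 0 := by
    intro i hi
    rw [hterm i, pd_const_mul _ _ ((dXc i).fun_mul (dXc i)), pd_mul _ (dXc i) (dXc i), pd_Xc]
    rcases eq_or_ne i j with rfl | hij
    · rw [if_pos rfl, if_pos ⟨rfl, Finset.mem_range.1 hi⟩]; ring
    · rw [if_neg hij, if_neg (fun hc => hij hc.1)]; ring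
  rw [Finset.sum_congr rfl key, Finset.sum_ite_eq' (Finset.range (2 * n)) j
    (fun _ => 2 * (lam j * Xc n j x))]
  by_cases hj : j < 2 * n
  · rw [if_pos (Finset.mem_range.2 hj)]; ring
  · rw [if_neg (fun hc => hj (Finset.mem_range.1 hc))]
    have : Xc n j x = 0 := by simp [Xc, hj]
    rw [this]; ring

lemma pd_comm {g : Pt n → ℝ} (hg : ContDiff ℝ ∞ g) (i j : ℕ) (x : Pt n) :
    pd n i (pd n j g) x = pd n j (pd n i g) x := by
  have hd : Differentiable ℝ (fderiv ℝ g) :=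
    (hg.fderiv_right inf_add_one_le).differentiable (by simp)
  have key : ∀ (a b : Pt n),
      fderiv ℝ (fun y => fderiv ℝ g y a) x b = fderiv ℝ (fderiv ℝ g) x b a := by
    intro a b
    rw [fderiv_clm_apply (hd x) (differentiableAt_const a)]
    simp
  have hsymm := (hg.contDiffAt (x := x)).isSymmSndFDerivAt (by simpa [minSmoothness_of_isRCLikeNormedField] using two_le_inf)
  by_cases hi : i < 2 * n
  · by_cases hj : j < 2 * n
    · have hpj : pd n j g = fun y => fderiv ℝ g y (Pi.single ⟨j, hj⟩ 1) := by
        funext y; simp [pd, hj]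
      have hpi : pd n i g = fun y => fderiv ℝ g y (Pi.single ⟨i, hi⟩ 1) := by
        funext y; simp [pd, hi]
      simp only [pd, dif_pos hi, dif_pos hj, hpj, hpi]
      rw [key, key]
      exact hsymm _ _
    · have hpj : pd n j g = fun _ : Pt n => (0 : ℝ) := by funext y; simp [pd, hj]
      rw [hpj, pd_const]
      simp [pd, hj]
  · have hpi : pd n i g = fun _ : Pt n => (0 : ℝ) := by funext y; simp [pd, hi]
    rw [hpi, pd_const]
    simp [pd, hi]

end PD

/-- `Dᵢ = ∂ᵢ + ∂ᵢf`. -/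
def Dp (n : ℕ) (T : ℝ) (lam : ℕ → ℝ) (i : ℕ) (β : FForm n) : FForm n :=
  fun S x => pd n i (β S) x + T * lam i * Xc n i x * β S x

/-- `D̄ᵢ = ∂ᵢ - ∂ᵢf`. -/
def Db (n : ℕ) (T : ℝ) (lam : ℕ → ℝ) (i : ℕ) (β : FForm n) : FForm n :=
  fun S x => pd n i (β S) x - T * lam i * Xc n i x * β S x

/-- Componentwise smoothness of a form. -/
def Sm (n : ℕ) (β : FForm n) : Prop := ∀ S, ContDiff ℝ ∞ (β S)

section Ops
variable {n : ℕ} (T : ℝ) (lam : ℕ → ℝ)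

lemma Sm.diffAt {β : FForm n} (hβ : Sm n β) (S : Finset ℕ) (x : Pt n) :
    DifferentiableAt ℝ (β S) x :=
  ((hβ S).differentiable (by simp)).differentiableAt

lemma Sm.wdg {β : FForm n} (hβ : Sm n β) (i : ℕ) : Sm n (wdgF n i β) := by
  intro S
  show ContDiff ℝ ∞ (fun x => if i ∈ S then sgn i S * β (S.erase i) x else 0)
  by_cases h : i ∈ S
  · simp only [if_pos h]; exact contDiff_const.mul (hβ _)
  · simp only [if_neg h]; exact contDiff_const

lemma Sm.ctr {β : FForm n} (hβ : Sm n β) (i : ℕ) : Sm n (ctrF n i β) := by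
  intro S
  show ContDiff ℝ ∞ (fun x => if i ∈ S then 0 else sgn i S * β (insert i S) x)
  by_cases h : i ∈ S
  · simp only [if_pos h]; exact contDiff_const
  · simp only [if_neg h]; exact contDiff_const.mul (hβ _)

lemma Sm.dp {β : FForm n} (hβ : Sm n β) (i : ℕ) : Sm n (Dp n T lam i β) := by
  intro S
  show ContDiff ℝ ∞ (fun x => pd n i (β S) x + T * lam i * Xc n i x * β S x)
  exact (contDiff_pd i (hβ S)).add ((contDiff_const.mul (contDiff_Xc i)).mul (hβ S))

lemma Sm.db {β : FForm n} (hβ : Sm n β) (i : ℕ) : Sm n (Db n T lam i β) := by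
  intro S
  show ContDiff ℝ ∞ (fun x => pd n i (β S) x - T * lam i * Xc n i x * β S x)
  exact (contDiff_pd i (hβ S)).sub ((contDiff_const.mul (contDiff_Xc i)).mul (hβ S))

lemma Dp_app (i : ℕ) (β : FForm n) (S : Finset ℕ) :
    Dp n T lam i β S = fun y => pd n i (β S) y + T * lam i * Xc n i y * β S y := rfl

lemma Db_app (i : ℕ) (β : FForm n) (S : Finset ℕ) :
    Db n T lam i β S = fun y => pd n i (β S) y - T * lam i * Xc n i y * β S y := rfl

lemma pd_wdgF (k i : ℕ) {β : FForm n} (hβ : Sm n β) (S : Finset ℕ) (x : Pt n) :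
    pd n k (wdgF n i β S) x = wdgF n i (fun S' => pd n k (β S')) S x := by
  by_cases h : i ∈ S
  · have h1 : wdgF n i β S = fun y => sgn i S * β (S.erase i) y := by
      funext y; simp only [wdgF, if_pos h]
    rw [h1, pd_const_mul _ _ (hβ.diffAt _ _)]
    simp only [wdgF, if_pos h]
  · have h1 : wdgF n i β S = fun _ => (0 : ℝ) := by
      funext y; simp only [wdgF, if_neg h]
    rw [h1, pd_const]
    simp only [wdgF, if_neg h]

lemma pd_ctrF (k i : ℕ) {β : FForm n} (hβ : Sm n β) (S : Finset ℕ) (x : Pt n) :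
    pd n k (ctrF n i β S) x = ctrF n i (fun S' => pd n k (β S')) S x := by
  by_cases h : i ∈ S
  · have h1 : ctrF n i β S = fun _ => (0 : ℝ) := by
      funext y; simp only [ctrF, if_pos h]
    rw [h1, pd_const]
    simp only [ctrF, if_pos h]
  · have h1 : ctrF n i β S = fun y => sgn i S * β (insert i S) y := by
      funext y; simp only [ctrF, if_neg h]
    rw [h1, pd_const_mul _ _ (hβ.diffAt _ _)]
    simp only [ctrF, if_neg h]

lemma Dp_wdgF (i j : ℕ) {β : FForm n} (hβ : Sm n β) :
    Dp n T lam i (wdgF n j β) = wdgF n j (Dp n T lam i β) := by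
  funext S x
  simp only [Dp]
  rw [pd_wdgF i j hβ]
  by_cases h : j ∈ S <;> simp only [Dp, wdgF, if_pos, if_neg, h, if_true, if_false] <;> ring

lemma Db_wdgF (i j : ℕ) {β : FForm n} (hβ : Sm n β) :
    Db n T lam i (wdgF n j β) = wdgF n j (Db n T lam i β) := by
  funext S x
  simp only [Db]
  rw [pd_wdgF i j hβ]
  by_cases h : j ∈ S <;> simp only [Db, wdgF, if_pos, if_neg, h, if_true, if_false] <;> ring

lemma Dp_ctrF (i j : ℕ) {β : FForm n} (hβ : Sm n β) :
    Dp n T lam i (ctrF n j β) = ctrF n j (Dp n T lam i β) := by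
  funext S x
  simp only [Dp]
  rw [pd_ctrF i j hβ]
  by_cases h : j ∈ S <;> simp only [Dp, ctrF, if_pos, if_neg, h, if_true, if_false] <;> ring

lemma Db_ctrF (i j : ℕ) {β : FForm n} (hβ : Sm n β) :
    Db n T lam i (ctrF n j β) = ctrF n j (Db n T lam i β) := by
  funext S x
  simp only [Db]
  rw [pd_ctrF i j hβ]
  by_cases h : j ∈ S <;> simp only [Db, ctrF, if_pos, if_neg, h, if_true, if_false] <;> ring

lemma dW_eq (α : FForm n) :
    dW n T lam α = fun S x => ∑ i ∈ Finset.range (2 * n), wdgF n i (Dp n T lam i α) S x := by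
  funext S x
  simp only [dW, dExt]
  rw [← Finset.sum_add_distrib]
  refine Finset.sum_congr rfl fun i _ => ?_
  rw [pd_fquad]
  simp only [wdgF, Dp]
  split <;> ring

lemma dWStar_eq (α : FForm n) :
    dWStar n T lam α
      = fun S x => -∑ i ∈ Finset.range (2 * n), ctrF n i (Db n T lam i α) S x := by
  funext S x
  simp only [dWStar, dStar]
  have key : ∀ i ∈ Finset.range (2 * n), ctrF n i (Db n T lam i α) S x
      = ctrF n i (fun S' => pd n i (α S')) S x - pd n i (fquad n T lam) x * ctrF n i α S x := by
    intro i _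
    rw [pd_fquad]
    simp only [ctrF, Db]
    split <;> ring
  rw [Finset.sum_congr rfl key, Finset.sum_sub_distrib]
  ring

lemma DpDb_comm (i k : ℕ) (hi : i < 2 * n) (hk : k < 2 * n) {β : FForm n} (hβ : Sm n β) :
    Dp n T lam i (Db n T lam k β) = fun S x =>
      Db n T lam k (Dp n T lam i β) S x
        + (-2 * T * lam i) * (if i = k then β S x else 0) := by
  funext S x
  have dβ : DifferentiableAt ℝ (β S) x := hβ.diffAt S x
  have dX : ∀ m : ℕ, DifferentiableAt ℝ (Xc n m) x :=
    fun m => ((contDiff_Xc m).differentiable (by simp)).differentiableAt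
  have dpd : ∀ m : ℕ, DifferentiableAt ℝ (pd n m (β S)) x :=
    fun m => ((contDiff_pd m (hβ S)).differentiable (by simp)).differentiableAt
  have dglin : ∀ m : ℕ, DifferentiableAt ℝ (fun y => T * lam m * Xc n m y) x :=
    fun m => (differentiableAt_const _).mul (dX m)
  have dprod : ∀ m : ℕ, DifferentiableAt ℝ (fun y => T * lam m * Xc n m y * β S y) x :=
    fun m => (dglin m).mul dβ
  have hpdg : ∀ m : ℕ, pd n i (fun y => T * lam m * Xc n m y) x
      = T * lam m * (if m = i ∧ m < 2 * n then 1 else 0) := by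
    intro m
    rw [pd_const_mul _ _ (dX m), pd_Xc]
  have hpdg2 : ∀ m : ℕ, pd n k (fun y => T * lam m * Xc n m y) x
      = T * lam m * (if m = k ∧ m < 2 * n then 1 else 0) := by
    intro m
    rw [pd_const_mul _ _ (dX m), pd_Xc]
  simp only [Dp, Db]
  rw [Db_app T lam k β S, Dp_app T lam i β S]
  rw [pd_sub i (dpd k) (dprod k), pd_mul i (dglin k) dβ, hpdg k,
    pd_add k (dpd i) (dprod i), pd_mul k (dglin i) dβ, hpdg2 i,
    pd_comm (hβ S) i k x]
  rcases eq_or_ne i k with rfl | hik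
  · rw [if_pos rfl, if_pos ⟨rfl, hi⟩]; ring
  · rw [if_neg hik, if_neg (fun hc => hik hc.1.symm), if_neg (fun hc => hik hc.1)]; ring

lemma DbDp_comm (i k : ℕ) (hi : i < 2 * n) (hk : k < 2 * n) {β : FForm n} (hβ : Sm n β) :
    Db n T lam i (Dp n T lam k β) = fun S x =>
      Dp n T lam k (Db n T lam i β) S x
        + (2 * T * lam i) * (if i = k then β S x else 0) := by
  funext S x
  have dβ : DifferentiableAt ℝ (β S) x := hβ.diffAt S x
  have dX : ∀ m : ℕ, DifferentiableAt ℝ (Xc n m) x :=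
    fun m => ((contDiff_Xc m).differentiable (by simp)).differentiableAt
  have dpd : ∀ m : ℕ, DifferentiableAt ℝ (pd n m (β S)) x :=
    fun m => ((contDiff_pd m (hβ S)).differentiable (by simp)).differentiableAt
  have dglin : ∀ m : ℕ, DifferentiableAt ℝ (fun y => T * lam m * Xc n m y) x :=
    fun m => (differentiableAt_const _).mul (dX m)
  have dprod : ∀ m : ℕ, DifferentiableAt ℝ (fun y => T * lam m * Xc n m y * β S y) x :=
    fun m => (dglin m).mul dβ
  have hpdg : ∀ m : ℕ, pd n i (fun y => T * lam m * Xc n m y) x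
      = T * lam m * (if m = i ∧ m < 2 * n then 1 else 0) := by
    intro m
    rw [pd_const_mul _ _ (dX m), pd_Xc]
  have hpdg2 : ∀ m : ℕ, pd n k (fun y => T * lam m * Xc n m y) x
      = T * lam m * (if m = k ∧ m < 2 * n then 1 else 0) := by
    intro m
    rw [pd_const_mul _ _ (dX m), pd_Xc]
  simp only [Dp, Db]
  rw [Dp_app T lam k β S, Db_app T lam i β S]
  rw [pd_add i (dpd k) (dprod k), pd_mul i (dglin k) dβ, hpdg k,
    pd_sub k (dpd i) (dprod i), pd_mul k (dglin i) dβ, hpdg2 i,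
    pd_comm (hβ S) i k x]
  rcases eq_or_ne i k with rfl | hik
  · rw [if_pos rfl, if_pos ⟨rfl, hi⟩]; ring
  · rw [if_neg hik, if_neg (fun hc => hik hc.1.symm), if_neg (fun hc => hik hc.1)]; ring

end Ops

section Brkt
variable {n : ℕ} (T : ℝ) (lam : ℕ → ℝ)

/-- `[eⱼeₖ, eᵢ†] = δᵢₖ eⱼ − δᵢⱼ eₖ` applied to a form. -/
lemma wdg_wdg_ctr (j k i : ℕ) (β : FForm n) (S : Finset ℕ) (x : Pt n) :
    wdgF n j (wdgF n k (ctrF n i β)) S x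
      = ctrF n i (wdgF n j (wdgF n k β)) S x
        + (if i = k then wdgF n j β S x else 0) - (if i = j then wdgF n k β S x else 0) := by
  have h1 : wdgF n k (ctrF n i β) = fun S' y =>
      (if k = i then β S' y else 0) - ctrF n i (wdgF n k β) S' y := by
    funext S' y
    have h := wdg_ctr_anti k i β S' y
    linarith
  rw [h1, wdgF_sub, wdgF_if]
  have h2 := wdg_ctr_anti j i (wdgF n k β) S x
  rcases eq_or_ne i k with rfl | hik <;> rcases eq_or_ne i j with rfl | hij
  · simp only [eq_self_iff_true, if_true] at h2 ⊢; linarith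
  · simp only [eq_self_iff_true, if_true, if_neg hij, if_neg (Ne.symm hij)] at h2 ⊢; linarith
  · simp only [eq_self_iff_true, if_true, if_neg hik, if_neg (Ne.symm hik)] at h2 ⊢; linarith
  · simp only [if_neg hij, if_neg (Ne.symm hij), if_neg hik, if_neg (Ne.symm hik)] at h2 ⊢
    linarith

/-- `[eᵢ, eⱼ†eₖ†] = δᵢⱼ eₖ† − δᵢₖ eⱼ†` applied to a form. -/
lemma wdg_ctr_ctr (i j k : ℕ) (β : FForm n) (S : Finset ℕ) (x : Pt n) :
    wdgF n i (ctrF n j (ctrF n k β)) S x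
      = ctrF n j (ctrF n k (wdgF n i β)) S x
        + (if i = j then ctrF n k β S x else 0) - (if i = k then ctrF n j β S x else 0) := by
  have h0 := wdg_ctr_anti i j (ctrF n k β) S x
  have h1 : wdgF n i (ctrF n k β) = fun S' y =>
      (if i = k then β S' y else 0) - ctrF n k (wdgF n i β) S' y := by
    funext S' y
    have h := wdg_ctr_anti i k β S' y
    linarith
  have h2 : ctrF n j (wdgF n i (ctrF n k β)) S x
      = (if i = k then ctrF n j β S x else 0) - ctrF n j (ctrF n k (wdgF n i β)) S x := by
    rw [h1, ctrF_sub, ctrF_if]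
  rcases eq_or_ne i j with rfl | hij
  · simp only [eq_self_iff_true, if_true] at h0 ⊢; linarith
  · simp only [if_neg hij] at h0 ⊢; linarith

lemma pd_neg (i : ℕ) {g : Pt n → ℝ} (x : Pt n) :
    pd n i (fun y => -g y) x = -pd n i g x := by
  unfold pd; split
  · rw [fderiv_fun_neg]; simp
  · simp

lemma Dp_sum {ι : Type*} (u : Finset ι) (F : ι → FForm n) (hF : ∀ t ∈ u, Sm n (F t)) (i : ℕ) :
    Dp n T lam i (fun S x => ∑ t ∈ u, F t S x) = fun S x => ∑ t ∈ u, Dp n T lam i (F t) S x := by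
  funext S x
  simp only [Dp]
  rw [pd_sum i u (fun t => F t S) (fun t ht => (hF t ht).diffAt S x), Finset.mul_sum,
    ← Finset.sum_add_distrib]

lemma Db_sum {ι : Type*} (u : Finset ι) (F : ι → FForm n) (hF : ∀ t ∈ u, Sm n (F t)) (i : ℕ) :
    Db n T lam i (fun S x => ∑ t ∈ u, F t S x) = fun S x => ∑ t ∈ u, Db n T lam i (F t) S x := by
  funext S x
  simp only [Db]
  rw [pd_sum i u (fun t => F t S) (fun t ht => (hF t ht).diffAt S x), Finset.mul_sum,
    ← Finset.sum_sub_distrib]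

lemma Dp_neg (β : FForm n) (i : ℕ) :
    Dp n T lam i (fun S x => -β S x) = fun S x => -Dp n T lam i β S x := by
  funext S x
  simp only [Dp]
  rw [pd_neg]
  ring

lemma Db_neg (β : FForm n) (i : ℕ) :
    Db n T lam i (fun S x => -β S x) = fun S x => -Db n T lam i β S x := by
  funext S x
  simp only [Db]
  rw [pd_neg]
  ring

lemma Dp_subf (a b : FForm n) (ha : Sm n a) (hb : Sm n b) (i : ℕ) :
    Dp n T lam i (fun S x => a S x - b S x)
      = fun S x => Dp n T lam i a S x - Dp n T lam i b S x := by
  funext S x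
  simp only [Dp]
  rw [pd_sub i (ha.diffAt S x) (hb.diffAt S x)]
  ring

lemma Db_subf (a b : FForm n) (ha : Sm n a) (hb : Sm n b) (i : ℕ) :
    Db n T lam i (fun S x => a S x - b S x)
      = fun S x => Db n T lam i a S x - Db n T lam i b S x := by
  funext S x
  simp only [Db]
  rw [pd_sub i (ha.diffAt S x) (hb.diffAt S x)]
  ring

lemma wdgF_negsum {ι : Type*} (u : Finset ι) (F : ι → FForm n) (i : ℕ) (S : Finset ℕ) (x : Pt n) :
    wdgF n i (fun S' y => -∑ t ∈ u, F t S' y) S x = -∑ t ∈ u, wdgF n i (F t) S x := by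
  simp only [wdgF]; split
  · rw [mul_neg, Finset.mul_sum]
  · simp

lemma ctrF_negsum {ι : Type*} (u : Finset ι) (F : ι → FForm n) (i : ℕ) (S : Finset ℕ) (x : Pt n) :
    ctrF n i (fun S' y => -∑ t ∈ u, F t S' y) S x = -∑ t ∈ u, ctrF n i (F t) S x := by
  simp only [ctrF]; split
  · simp
  · rw [mul_neg, Finset.mul_sum]

lemma Sm_sum {ι : Type*} (u : Finset ι) (F : ι → FForm n) (hF : ∀ t ∈ u, Sm n (F t)) :
    Sm n (fun S x => ∑ t ∈ u, F t S x) :=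
  fun S => ContDiff.sum fun t ht => hF t ht S

lemma Sm_neg (β : FForm n) (hβ : Sm n β) : Sm n (fun S x => -β S x) :=
  fun S => (hβ S).neg

lemma Sm_sub (a b : FForm n) (ha : Sm n a) (hb : Sm n b) : Sm n (fun S x => a S x - b S x) :=
  fun S => (ha S).sub (hb S)

lemma Sm_dW (α : FForm n) (hα : Sm n α) : Sm n (dW n T lam α) := by
  rw [dW_eq]
  exact Sm_sum _ _ fun i _ => (hα.dp T lam i).wdg (i := i)

lemma Sm_dWStar (α : FForm n) (hα : Sm n α) : Sm n (dWStar n T lam α) := by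
  rw [dWStar_eq]
  exact Sm_neg _ (Sm_sum _ _ fun i _ => (hα.db T lam i).ctr (i := i))

end Brkt

section LemAB
variable {n : ℕ} (T : ℝ) (lam : ℕ → ℝ)

/-- `d_f^{Λ*} = −∑ₐ (e_{2a} D̄_{2a+1} − e_{2a+1} D̄_{2a})`. -/
lemma dWLStar_eq (α : FForm n) (hα : Sm n α) :
    dWLStar n T lam α = fun S x => ∑ a ∈ Finset.range n,
      (wdgF n (2*a+1) (Db n T lam (2*a) α) S x - wdgF n (2*a) (Db n T lam (2*a+1) α) S x) := by
  funext S x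
  simp only [dWLStar, LF]
  rw [dWStar_eq T lam α]
  have t1 : ∀ a ∈ Finset.range n,
      wdgF n (2*a) (wdgF n (2*a+1)
          (fun S x => -∑ i ∈ Finset.range (2*n), ctrF n i (Db n T lam i α) S x)) S x
      = -∑ i ∈ Finset.range (2*n),
          wdgF n (2*a) (wdgF n (2*a+1) (ctrF n i (Db n T lam i α))) S x := by
    intro a _
    have hinner : wdgF n (2*a+1)
        (fun S x => -∑ i ∈ Finset.range (2*n), ctrF n i (Db n T lam i α) S x)
        = fun S' y => -∑ i ∈ Finset.range (2*n),
            wdgF n (2*a+1) (ctrF n i (Db n T lam i α)) S' y := by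
      funext S' y
      exact wdgF_negsum _ _ _ _ _
    rw [hinner]
    exact wdgF_negsum _ _ _ _ _
  rw [Finset.sum_congr rfl t1]
  have hLF : ∀ i : ℕ, Db n T lam i (LF n α)
      = fun S x => ∑ a ∈ Finset.range n,
          wdgF n (2*a) (wdgF n (2*a+1) (Db n T lam i α)) S x := by
    intro i
    have h0 : LF n α = fun S x => ∑ a ∈ Finset.range n,
        wdgF n (2*a) (wdgF n (2*a+1) α) S x := rfl
    rw [h0, Db_sum T lam _ _ (fun a _ => (hα.wdg (2*a+1)).wdg (2*a))]
    funext S x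
    refine Finset.sum_congr rfl fun a _ => ?_
    rw [Db_wdgF T lam i (2*a) (hα.wdg (2*a+1)), Db_wdgF T lam i (2*a+1) hα]
  have t2 : dWStar n T lam (LF n α) S x
      = -∑ i ∈ Finset.range (2*n), ∑ a ∈ Finset.range n,
          ctrF n i (wdgF n (2*a) (wdgF n (2*a+1) (Db n T lam i α))) S x := by
    rw [dWStar_eq T lam (LF n α)]
    refine congrArg Neg.neg (Finset.sum_congr rfl fun i _ => ?_)
    rw [hLF i]
    exact ctrF_sum _ _ _ _ _
  rw [t2, Finset.sum_comm, sub_neg_eq_add, ← Finset.sum_add_distrib]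
  refine Finset.sum_congr rfl fun a ha => ?_
  rw [neg_add_eq_sub, ← Finset.sum_sub_distrib]
  have key : ∀ i ∈ Finset.range (2*n),
      ctrF n i (wdgF n (2*a) (wdgF n (2*a+1) (Db n T lam i α))) S x
        - wdgF n (2*a) (wdgF n (2*a+1) (ctrF n i (Db n T lam i α))) S x
      = (if i = 2*a then wdgF n (2*a+1) (Db n T lam i α) S x else 0)
        - (if i = 2*a+1 then wdgF n (2*a) (Db n T lam i α) S x else 0) := by
    intro i _
    rw [wdg_wdg_ctr (2*a) (2*a+1) i (Db n T lam i α) S x]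
    ring
  rw [Finset.sum_congr rfl key, Finset.sum_sub_distrib,
    Finset.sum_ite_eq' (Finset.range (2*n)) (2*a)
      (fun i => wdgF n (2*a+1) (Db n T lam i α) S x),
    Finset.sum_ite_eq' (Finset.range (2*n)) (2*a+1)
      (fun i => wdgF n (2*a) (Db n T lam i α) S x),
    if_pos (Finset.mem_range.2 (by have := Finset.mem_range.1 ha; omega)),
    if_pos (Finset.mem_range.2 (by have := Finset.mem_range.1 ha; omega))]

/-- `d_f^Λ = ∑ₐ (e_{2a}† D_{2a+1} − e_{2a+1}† D_{2a})`. -/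
lemma dWL_eq (α : FForm n) (hα : Sm n α) :
    dWL n T lam α = fun S x => ∑ a ∈ Finset.range n,
      (ctrF n (2*a) (Dp n T lam (2*a+1) α) S x - ctrF n (2*a+1) (Dp n T lam (2*a) α) S x) := by
  funext S x
  simp only [dWL, LamF]
  rw [dW_eq T lam α]
  have t2 : ∀ a ∈ Finset.range n,
      ctrF n (2*a+1) (ctrF n (2*a)
          (fun S x => ∑ i ∈ Finset.range (2*n), wdgF n i (Dp n T lam i α) S x)) S x
      = ∑ i ∈ Finset.range (2*n),
          ctrF n (2*a+1) (ctrF n (2*a) (wdgF n i (Dp n T lam i α))) S x := by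
    intro a _
    have hinner : ctrF n (2*a)
        (fun S x => ∑ i ∈ Finset.range (2*n), wdgF n i (Dp n T lam i α) S x)
        = fun S' y => ∑ i ∈ Finset.range (2*n),
            ctrF n (2*a) (wdgF n i (Dp n T lam i α)) S' y := by
      funext S' y
      exact ctrF_sum _ _ _ _ _
    rw [hinner]
    exact ctrF_sum _ _ _ _ _
  rw [Finset.sum_congr rfl t2]
  have hLam : ∀ i : ℕ, Dp n T lam i (LamF n α)
      = fun S x => ∑ a ∈ Finset.range n,
          ctrF n (2*a+1) (ctrF n (2*a) (Dp n T lam i α)) S x := by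
    intro i
    have h0 : LamF n α = fun S x => ∑ a ∈ Finset.range n,
        ctrF n (2*a+1) (ctrF n (2*a) α) S x := rfl
    rw [h0, Dp_sum T lam _ _ (fun a _ => (hα.ctr (2*a)).ctr (2*a+1))]
    funext S x
    refine Finset.sum_congr rfl fun a _ => ?_
    rw [Dp_ctrF T lam i (2*a+1) (hα.ctr (2*a)), Dp_ctrF T lam i (2*a) hα]
  have t1 : dW n T lam (LamF n α) S x
      = ∑ i ∈ Finset.range (2*n), ∑ a ∈ Finset.range n,
          wdgF n i (ctrF n (2*a+1) (ctrF n (2*a) (Dp n T lam i α))) S x := by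
    rw [dW_eq T lam (LamF n α)]
    refine Finset.sum_congr rfl fun i _ => ?_
    rw [hLam i]
    exact wdgF_sum _ _ _ _ _
  rw [t1, Finset.sum_comm, ← Finset.sum_sub_distrib]
  refine Finset.sum_congr rfl fun a ha => ?_
  rw [← Finset.sum_sub_distrib]
  have key : ∀ i ∈ Finset.range (2*n),
      wdgF n i (ctrF n (2*a+1) (ctrF n (2*a) (Dp n T lam i α))) S x
        - ctrF n (2*a+1) (ctrF n (2*a) (wdgF n i (Dp n T lam i α))) S x
      = (if i = 2*a+1 then ctrF n (2*a) (Dp n T lam i α) S x else 0)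
        - (if i = 2*a then ctrF n (2*a+1) (Dp n T lam i α) S x else 0) := by
    intro i _
    rw [wdg_ctr_ctr i (2*a+1) (2*a) (Dp n T lam i α) S x]
    ring
  rw [Finset.sum_congr rfl key, Finset.sum_sub_distrib,
    Finset.sum_ite_eq' (Finset.range (2*n)) (2*a+1)
      (fun i => ctrF n (2*a) (Dp n T lam i α) S x),
    Finset.sum_ite_eq' (Finset.range (2*n)) (2*a)
      (fun i => ctrF n (2*a+1) (Dp n T lam i α) S x),
    if_pos (Finset.mem_range.2 (by have := Finset.mem_range.1 ha; omega)),
    if_pos (Finset.mem_range.2 (by have := Finset.mem_range.1 ha; omega))]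

end LemAB

section Main
variable {n : ℕ} (T : ℝ) (lam : ℕ → ℝ)

lemma wdgF_add_ite (j : ℕ) (a b : FForm n) (c : ℝ) (P : Prop) [Decidable P]
    (S : Finset ℕ) (x : Pt n) :
    wdgF n j (fun S' y => a S' y + c * (if P then b S' y else 0)) S x
      = wdgF n j a S x + c * (if P then wdgF n j b S x else 0) := by
  by_cases hP : P
  · simp only [if_pos hP, wdgF]; split <;> ring
  · simp only [if_neg hP, wdgF, mul_zero, add_zero]

lemma ctrF_add_ite (j : ℕ) (a b : FForm n) (c : ℝ) (P : Prop) [Decidable P]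
    (S : Finset ℕ) (x : Pt n) :
    ctrF n j (fun S' y => a S' y + c * (if P then b S' y else 0)) S x
      = ctrF n j a S x + c * (if P then ctrF n j b S x else 0) := by
  by_cases hP : P
  · simp only [if_pos hP, ctrF]; split <;> ring
  · simp only [if_neg hP, ctrF, mul_zero, add_zero]

/-- Cell computation: `eᵢ e_l Dᵢ D̄ₖ + e_l eᵢ D̄ₖ Dᵢ = −2Tλᵢ δᵢₖ eᵢ e_l`. -/
lemma cell_wdg (i k l : ℕ) (hi : i < 2 * n) (hk : k < 2 * n) (α : FForm n) (hα : Sm n α)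
    (S : Finset ℕ) (x : Pt n) :
    wdgF n i (wdgF n l (Dp n T lam i (Db n T lam k α))) S x
      + wdgF n l (wdgF n i (Db n T lam k (Dp n T lam i α))) S x
    = (if i = k then (-2 * T * lam i) * wdgF n i (wdgF n l α) S x else 0) := by
  rw [DpDb_comm T lam i k hi hk hα]
  have e : wdgF n l (fun S' y => Db n T lam k (Dp n T lam i α) S' y
        + (-2 * T * lam i) * (if i = k then α S' y else 0))
      = fun S' y => wdgF n l (Db n T lam k (Dp n T lam i α)) S' y
        + (-2 * T * lam i) * (if i = k then wdgF n l α S' y else 0) := by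
    funext S' y
    exact wdgF_add_ite l _ _ _ _ S' y
  rw [e, wdgF_add_ite]
  have anti := wdg_wdg_anti i l (Db n T lam k (Dp n T lam i α)) S x
  by_cases h : i = k
  · simp only [if_pos h]; linarith
  · simp only [if_neg h, mul_zero, add_zero]; linarith

/-- Cell computation: `eᵢ† e_l† D̄ᵢ Dₖ + e_l† eᵢ† Dₖ D̄ᵢ = 2Tλᵢ δᵢₖ eᵢ† e_l†`. -/
lemma cell_ctr (i k l : ℕ) (hi : i < 2 * n) (hk : k < 2 * n) (α : FForm n) (hα : Sm n α)
    (S : Finset ℕ) (x : Pt n) :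
    ctrF n i (ctrF n l (Db n T lam i (Dp n T lam k α))) S x
      + ctrF n l (ctrF n i (Dp n T lam k (Db n T lam i α))) S x
    = (if i = k then (2 * T * lam i) * ctrF n i (ctrF n l α) S x else 0) := by
  rw [DbDp_comm T lam i k hi hk hα]
  have e : ctrF n l (fun S' y => Dp n T lam k (Db n T lam i α) S' y
        + (2 * T * lam i) * (if i = k then α S' y else 0))
      = fun S' y => ctrF n l (Dp n T lam k (Db n T lam i α)) S' y
        + (2 * T * lam i) * (if i = k then ctrF n l α S' y else 0) := by
    funext S' y
    exact ctrF_add_ite l _ _ _ _ S' y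
  rw [e, ctrF_add_ite]
  have anti := ctr_ctr_anti i l (Dp n T lam k (Db n T lam i α)) S x
  by_cases h : i = k
  · simp only [if_pos h]; linarith
  · simp only [if_neg h, mul_zero, add_zero]; linarith

end Main

section Part1
variable {n : ℕ} (T : ℝ) (lam : ℕ → ℝ)

lemma part1 (α : FForm n) (hα : Sm n α) :
    (fun S x => dW n T lam (dWLStar n T lam α) S x + dWLStar n T lam (dW n T lam α) S x) =
      (fun (S : Finset ℕ) (x : Pt n) =>
        -2 * T * ∑ i ∈ Finset.range n,
          (lam (2 * i) + lam (2 * i + 1)) * wdgF n (2 * i) (wdgF n (2 * i + 1) α) S x) := by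
  have hdW : Sm n (dW n T lam α) := Sm_dW T lam α hα
  have hA : ∀ a : ℕ, Sm n (wdgF n (2*a+1) (Db n T lam (2*a) α)) :=
    fun a => (hα.db T lam (2*a)).wdg (2*a+1)
  have hB : ∀ a : ℕ, Sm n (wdgF n (2*a) (Db n T lam (2*a+1) α)) :=
    fun a => (hα.db T lam (2*a+1)).wdg (2*a)
  funext S x
  rw [dWLStar_eq T lam (dW n T lam α) hdW, dWLStar_eq T lam α hα,
    dW_eq T lam (fun S x => ∑ a ∈ Finset.range n,
      (wdgF n (2*a+1) (Db n T lam (2*a) α) S x - wdgF n (2*a) (Db n T lam (2*a+1) α) S x)),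
    dW_eq T lam α]
  beta_reduce
  -- Term 1 rewrite
  have t1 : ∀ i ∈ Finset.range (2*n),
      wdgF n i (Dp n T lam i (fun S x => ∑ a ∈ Finset.range n,
        (wdgF n (2*a+1) (Db n T lam (2*a) α) S x
          - wdgF n (2*a) (Db n T lam (2*a+1) α) S x))) S x
      = ∑ a ∈ Finset.range n,
          (wdgF n i (wdgF n (2*a+1) (Dp n T lam i (Db n T lam (2*a) α))) S x
            - wdgF n i (wdgF n (2*a) (Dp n T lam i (Db n T lam (2*a+1) α))) S x) := by
    intro i _
    have e1 : Dp n T lam i (fun S x => ∑ a ∈ Finset.range n,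
        (wdgF n (2*a+1) (Db n T lam (2*a) α) S x
          - wdgF n (2*a) (Db n T lam (2*a+1) α) S x))
        = fun S x => ∑ a ∈ Finset.range n,
            (wdgF n (2*a+1) (Dp n T lam i (Db n T lam (2*a) α)) S x
              - wdgF n (2*a) (Dp n T lam i (Db n T lam (2*a+1) α)) S x) := by
      rw [Dp_sum T lam (Finset.range n)
        (fun a => fun S x => wdgF n (2*a+1) (Db n T lam (2*a) α) S x
          - wdgF n (2*a) (Db n T lam (2*a+1) α) S x)
        (fun a _ => Sm_sub _ _ (hA a) (hB a)) i]
      funext S' y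
      refine Finset.sum_congr rfl fun a _ => ?_
      rw [Dp_subf T lam _ _ (hA a) (hB a) i,
        Dp_wdgF T lam i (2*a+1) (hα.db T lam (2*a)),
        Dp_wdgF T lam i (2*a) (hα.db T lam (2*a+1))]
    rw [e1, wdgF_sum (Finset.range n)
      (fun a => fun S x => wdgF n (2*a+1) (Dp n T lam i (Db n T lam (2*a) α)) S x
        - wdgF n (2*a) (Dp n T lam i (Db n T lam (2*a+1) α)) S x) i S x]
    refine Finset.sum_congr rfl fun a _ => ?_
    rw [wdgF_sub]
  -- Term 2 rewrite
  have hDb : ∀ k : ℕ, Db n T lam k (fun S x => ∑ i ∈ Finset.range (2*n),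
      wdgF n i (Dp n T lam i α) S x)
      = fun S x => ∑ i ∈ Finset.range (2*n),
          wdgF n i (Db n T lam k (Dp n T lam i α)) S x := by
    intro k
    rw [Db_sum T lam (Finset.range (2*n)) (fun i => wdgF n i (Dp n T lam i α))
      (fun i _ => (hα.dp T lam i).wdg i) k]
    funext S' y
    refine Finset.sum_congr rfl fun i _ => ?_
    rw [Db_wdgF T lam k i (hα.dp T lam i)]
  have t2 : ∀ a ∈ Finset.range n,
      wdgF n (2*a+1) (Db n T lam (2*a) (fun S x => ∑ i ∈ Finset.range (2*n),
          wdgF n i (Dp n T lam i α) S x)) S x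
        - wdgF n (2*a) (Db n T lam (2*a+1) (fun S x => ∑ i ∈ Finset.range (2*n),
          wdgF n i (Dp n T lam i α) S x)) S x
      = ∑ i ∈ Finset.range (2*n),
          (wdgF n (2*a+1) (wdgF n i (Db n T lam (2*a) (Dp n T lam i α))) S x
            - wdgF n (2*a) (wdgF n i (Db n T lam (2*a+1) (Dp n T lam i α))) S x) := by
    intro a _
    rw [hDb (2*a), hDb (2*a+1),
      wdgF_sum (Finset.range (2*n))
        (fun i => wdgF n i (Db n T lam (2*a) (Dp n T lam i α))) (2*a+1) S x,
      wdgF_sum (Finset.range (2*n))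
        (fun i => wdgF n i (Db n T lam (2*a+1) (Dp n T lam i α))) (2*a) S x,
      ← Finset.sum_sub_distrib]
  rw [Finset.sum_congr rfl t1, Finset.sum_congr rfl t2,
    Finset.sum_comm (s := Finset.range n) (t := Finset.range (2*n)),
    ← Finset.sum_add_distrib]
  have merge : ∀ i ∈ Finset.range (2*n),
      (∑ a ∈ Finset.range n,
          (wdgF n i (wdgF n (2*a+1) (Dp n T lam i (Db n T lam (2*a) α))) S x
            - wdgF n i (wdgF n (2*a) (Dp n T lam i (Db n T lam (2*a+1) α))) S x))
        + (∑ a ∈ Finset.range n,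
          (wdgF n (2*a+1) (wdgF n i (Db n T lam (2*a) (Dp n T lam i α))) S x
            - wdgF n (2*a) (wdgF n i (Db n T lam (2*a+1) (Dp n T lam i α))) S x))
      = ∑ a ∈ Finset.range n,
          ((wdgF n i (wdgF n (2*a+1) (Dp n T lam i (Db n T lam (2*a) α))) S x
            - wdgF n i (wdgF n (2*a) (Dp n T lam i (Db n T lam (2*a+1) α))) S x)
          + (wdgF n (2*a+1) (wdgF n i (Db n T lam (2*a) (Dp n T lam i α))) S x
            - wdgF n (2*a) (wdgF n i (Db n T lam (2*a+1) (Dp n T lam i α))) S x)) := by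
    intro i _
    rw [← Finset.sum_add_distrib]
  rw [Finset.sum_congr rfl merge, Finset.sum_comm, Finset.mul_sum]
  refine Finset.sum_congr rfl fun a ha => ?_
  have h2a : 2*a < 2*n := by have := Finset.mem_range.1 ha; omega
  have h2a1 : 2*a+1 < 2*n := by have := Finset.mem_range.1 ha; omega
  have key : ∀ i ∈ Finset.range (2*n),
      ((wdgF n i (wdgF n (2*a+1) (Dp n T lam i (Db n T lam (2*a) α))) S x
        - wdgF n i (wdgF n (2*a) (Dp n T lam i (Db n T lam (2*a+1) α))) S x)
      + (wdgF n (2*a+1) (wdgF n i (Db n T lam (2*a) (Dp n T lam i α))) S x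
        - wdgF n (2*a) (wdgF n i (Db n T lam (2*a+1) (Dp n T lam i α))) S x))
      = (if i = 2*a then (-2 * T * lam i) * wdgF n i (wdgF n (2*a+1) α) S x else 0)
        - (if i = 2*a+1 then (-2 * T * lam i) * wdgF n i (wdgF n (2*a) α) S x else 0) := by
    intro i hi
    have c1 := cell_wdg T lam i (2*a) (2*a+1) (Finset.mem_range.1 hi) h2a α hα S x
    have c2 := cell_wdg T lam i (2*a+1) (2*a) (Finset.mem_range.1 hi) h2a1 α hα S x
    linarith
  rw [Finset.sum_congr rfl key, Finset.sum_sub_distrib,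
    Finset.sum_ite_eq' (Finset.range (2*n)) (2*a)
      (fun i => (-2 * T * lam i) * wdgF n i (wdgF n (2*a+1) α) S x),
    Finset.sum_ite_eq' (Finset.range (2*n)) (2*a+1)
      (fun i => (-2 * T * lam i) * wdgF n i (wdgF n (2*a) α) S x),
    if_pos (Finset.mem_range.2 h2a), if_pos (Finset.mem_range.2 h2a1)]
  have anti := wdg_wdg_anti (2*a+1) (2*a) α S x
  have hF : wdgF n (2*a+1) (wdgF n (2*a) α) S x
      = -wdgF n (2*a) (wdgF n (2*a+1) α) S x := by linarith
  rw [hF]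
  ring

end Part1

section Part2
variable {n : ℕ} (T : ℝ) (lam : ℕ → ℝ)

lemma part2 (α : FForm n) (hα : Sm n α) :
    (fun S x => dWStar n T lam (dWL n T lam α) S x + dWL n T lam (dWStar n T lam α) S x) =
      (fun (S : Finset ℕ) (x : Pt n) =>
        2 * T * ∑ i ∈ Finset.range n,
          (lam (2 * i) + lam (2 * i + 1)) * ctrF n (2 * i) (ctrF n (2 * i + 1) α) S x) := by
  have hdWS : Sm n (dWStar n T lam α) := Sm_dWStar T lam α hα
  have hA : ∀ a : ℕ, Sm n (ctrF n (2*a) (Dp n T lam (2*a+1) α)) :=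
    fun a => (hα.dp T lam (2*a+1)).ctr (2*a)
  have hB : ∀ a : ℕ, Sm n (ctrF n (2*a+1) (Dp n T lam (2*a) α)) :=
    fun a => (hα.dp T lam (2*a)).ctr (2*a+1)
  funext S x
  rw [dWL_eq T lam (dWStar n T lam α) hdWS, dWL_eq T lam α hα,
    dWStar_eq T lam (fun S x => ∑ a ∈ Finset.range n,
      (ctrF n (2*a) (Dp n T lam (2*a+1) α) S x - ctrF n (2*a+1) (Dp n T lam (2*a) α) S x)),
    dWStar_eq T lam α]
  beta_reduce
  -- Term 1 rewrite
  have t1 : ∀ i ∈ Finset.range (2*n),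
      ctrF n i (Db n T lam i (fun S x => ∑ a ∈ Finset.range n,
        (ctrF n (2*a) (Dp n T lam (2*a+1) α) S x
          - ctrF n (2*a+1) (Dp n T lam (2*a) α) S x))) S x
      = ∑ a ∈ Finset.range n,
          (ctrF n i (ctrF n (2*a) (Db n T lam i (Dp n T lam (2*a+1) α))) S x
            - ctrF n i (ctrF n (2*a+1) (Db n T lam i (Dp n T lam (2*a) α))) S x) := by
    intro i _
    have e1 : Db n T lam i (fun S x => ∑ a ∈ Finset.range n,
        (ctrF n (2*a) (Dp n T lam (2*a+1) α) S x
          - ctrF n (2*a+1) (Dp n T lam (2*a) α) S x))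
        = fun S x => ∑ a ∈ Finset.range n,
            (ctrF n (2*a) (Db n T lam i (Dp n T lam (2*a+1) α)) S x
              - ctrF n (2*a+1) (Db n T lam i (Dp n T lam (2*a) α)) S x) := by
      rw [Db_sum T lam (Finset.range n)
        (fun a => fun S x => ctrF n (2*a) (Dp n T lam (2*a+1) α) S x
          - ctrF n (2*a+1) (Dp n T lam (2*a) α) S x)
        (fun a _ => Sm_sub _ _ (hA a) (hB a)) i]
      funext S' y
      refine Finset.sum_congr rfl fun a _ => ?_
      rw [Db_subf T lam _ _ (hA a) (hB a) i,
        Db_ctrF T lam i (2*a) (hα.dp T lam (2*a+1)),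
        Db_ctrF T lam i (2*a+1) (hα.dp T lam (2*a))]
    rw [e1, ctrF_sum (Finset.range n)
      (fun a => fun S x => ctrF n (2*a) (Db n T lam i (Dp n T lam (2*a+1) α)) S x
        - ctrF n (2*a+1) (Db n T lam i (Dp n T lam (2*a) α)) S x) i S x]
    refine Finset.sum_congr rfl fun a _ => ?_
    rw [ctrF_sub]
  -- Term 2 rewrite
  have hDp : ∀ k : ℕ, Dp n T lam k (fun S x => -∑ i ∈ Finset.range (2*n),
      ctrF n i (Db n T lam i α) S x)
      = fun S x => -∑ i ∈ Finset.range (2*n),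
          ctrF n i (Dp n T lam k (Db n T lam i α)) S x := by
    intro k
    rw [Dp_neg T lam (fun S x => ∑ i ∈ Finset.range (2*n), ctrF n i (Db n T lam i α) S x) k,
      Dp_sum T lam (Finset.range (2*n)) (fun i => ctrF n i (Db n T lam i α))
        (fun i _ => (hα.db T lam i).ctr i) k]
    funext S' y
    beta_reduce
    refine congrArg Neg.neg (Finset.sum_congr rfl fun i _ => ?_)
    rw [Dp_ctrF T lam k i (hα.db T lam i)]
  have t2 : ∀ a ∈ Finset.range n,
      ctrF n (2*a) (Dp n T lam (2*a+1) (fun S x => -∑ i ∈ Finset.range (2*n),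
          ctrF n i (Db n T lam i α) S x)) S x
        - ctrF n (2*a+1) (Dp n T lam (2*a) (fun S x => -∑ i ∈ Finset.range (2*n),
          ctrF n i (Db n T lam i α) S x)) S x
      = -∑ i ∈ Finset.range (2*n),
          (ctrF n (2*a) (ctrF n i (Dp n T lam (2*a+1) (Db n T lam i α))) S x
            - ctrF n (2*a+1) (ctrF n i (Dp n T lam (2*a) (Db n T lam i α))) S x) := by
    intro a _
    rw [hDp (2*a+1), hDp (2*a),
      ctrF_negsum (Finset.range (2*n))
        (fun i => ctrF n i (Dp n T lam (2*a+1) (Db n T lam i α))) (2*a) S x,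
      ctrF_negsum (Finset.range (2*n))
        (fun i => ctrF n i (Dp n T lam (2*a) (Db n T lam i α))) (2*a+1) S x,
      Finset.sum_sub_distrib]
    ring
  rw [Finset.sum_congr rfl t1, Finset.sum_congr rfl t2, Finset.sum_neg_distrib,
    Finset.sum_comm (s := Finset.range (2*n)) (t := Finset.range n),
    ← neg_add, ← Finset.sum_add_distrib]
  have merge : ∀ a ∈ Finset.range n,
      (∑ i ∈ Finset.range (2*n),
          (ctrF n i (ctrF n (2*a) (Db n T lam i (Dp n T lam (2*a+1) α))) S x
            - ctrF n i (ctrF n (2*a+1) (Db n T lam i (Dp n T lam (2*a) α))) S x))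
        + (∑ i ∈ Finset.range (2*n),
          (ctrF n (2*a) (ctrF n i (Dp n T lam (2*a+1) (Db n T lam i α))) S x
            - ctrF n (2*a+1) (ctrF n i (Dp n T lam (2*a) (Db n T lam i α))) S x))
      = ∑ i ∈ Finset.range (2*n),
          ((ctrF n i (ctrF n (2*a) (Db n T lam i (Dp n T lam (2*a+1) α))) S x
            - ctrF n i (ctrF n (2*a+1) (Db n T lam i (Dp n T lam (2*a) α))) S x)
          + (ctrF n (2*a) (ctrF n i (Dp n T lam (2*a+1) (Db n T lam i α))) S x
            - ctrF n (2*a+1) (ctrF n i (Dp n T lam (2*a) (Db n T lam i α))) S x)) := by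
    intro a _
    rw [← Finset.sum_add_distrib]
  rw [Finset.sum_congr rfl merge, Finset.mul_sum, ← Finset.sum_neg_distrib]
  refine Finset.sum_congr rfl fun a ha => ?_
  have h2a : 2*a < 2*n := by have := Finset.mem_range.1 ha; omega
  have h2a1 : 2*a+1 < 2*n := by have := Finset.mem_range.1 ha; omega
  have key : ∀ i ∈ Finset.range (2*n),
      ((ctrF n i (ctrF n (2*a) (Db n T lam i (Dp n T lam (2*a+1) α))) S x
        - ctrF n i (ctrF n (2*a+1) (Db n T lam i (Dp n T lam (2*a) α))) S x)
      + (ctrF n (2*a) (ctrF n i (Dp n T lam (2*a+1) (Db n T lam i α))) S x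
        - ctrF n (2*a+1) (ctrF n i (Dp n T lam (2*a) (Db n T lam i α))) S x))
      = (if i = 2*a+1 then (2 * T * lam i) * ctrF n i (ctrF n (2*a) α) S x else 0)
        - (if i = 2*a then (2 * T * lam i) * ctrF n i (ctrF n (2*a+1) α) S x else 0) := by
    intro i hi
    have c1 := cell_ctr T lam i (2*a+1) (2*a) (Finset.mem_range.1 hi) h2a1 α hα S x
    have c2 := cell_ctr T lam i (2*a) (2*a+1) (Finset.mem_range.1 hi) h2a α hα S x
    linarith
  rw [Finset.sum_congr rfl key, Finset.sum_sub_distrib,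
    Finset.sum_ite_eq' (Finset.range (2*n)) (2*a+1)
      (fun i => (2 * T * lam i) * ctrF n i (ctrF n (2*a) α) S x),
    Finset.sum_ite_eq' (Finset.range (2*n)) (2*a)
      (fun i => (2 * T * lam i) * ctrF n i (ctrF n (2*a+1) α) S x),
    if_pos (Finset.mem_range.2 h2a1), if_pos (Finset.mem_range.2 h2a)]
  have anti := ctr_ctr_anti (2*a+1) (2*a) α S x
  have hF : ctrF n (2*a+1) (ctrF n (2*a) α) S x
      = -ctrF n (2*a) (ctrF n (2*a+1) α) S x := by linarith
  rw [hF]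
  ring

end Part2

/-- On `ℝ^{2n}` with Euclidean metric, standard symplectic
form, and `f = (T/2)∑ᵢ λᵢxᵢ²` (`λᵢ = ±1`), the anticommutators of the deformed
differentials satisfy
`d_f d_f^{Λ*} + d_f^{Λ*} d_f = −2T ∑_{i=1}^n (λ_{2i−1}+λ_{2i}) e_{2i−1} e_{2i}` and
`d_f* d_f^Λ + d_f^Λ d_f* = 2T ∑_{i=1}^n (λ_{2i−1}+λ_{2i}) e_{2i−1}† e_{2i}†`. -/
theorem witten_anticommutators (n : ℕ) (T : ℝ) (hT : 0 < T)
    (lam : ℕ → ℝ) (hlam : ∀ i, lam i = 1 ∨ lam i = -1)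
    (α : FForm n) (hα : ∀ S : Finset ℕ, ContDiff ℝ (⊤ : ℕ∞) (α S)) :
    (fun S x => dW n T lam (dWLStar n T lam α) S x + dWLStar n T lam (dW n T lam α) S x) =
      (fun (S : Finset ℕ) (x : Pt n) =>
        -2 * T * ∑ i ∈ Finset.range n,
          (lam (2 * i) + lam (2 * i + 1)) * wdgF n (2 * i) (wdgF n (2 * i + 1) α) S x) ∧
    (fun S x => dWStar n T lam (dWL n T lam α) S x + dWL n T lam (dWStar n T lam α) S x) =
      (fun (S : Finset ℕ) (x : Pt n) =>
        2 * T * ∑ i ∈ Finset.range n,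
          (lam (2 * i) + lam (2 * i + 1)) * ctrF n (2 * i) (ctrF n (2 * i + 1) α) S x) := by
  have hSm : Sm n α := fun S => (hα S).of_le (by simp)
  exact ⟨part1 T lam α hSm, part2 T lam α hSm⟩

end
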